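/- Let Δ be a simplicial complex with subcomplexes Δ' and Σ. Then the pair of spaces (|Δ| − |Σ|, |Δ'| − |Σ|) is homotopy equivalent as a pair to (|Sd(Δ−Σ)|, |Sd(Δ'−Σ)|), where Sd(X−Σ) denotes the full subcomplex of the barycentric subdivision Sd(X) on vertices that are not barycenters of faces of Σ. -/

import Mathlib

/-- An abstract simplicial complex on a vertex type `V`. -/
def IsComplex {V : Type*} (Δ : Set (Finset V)) : Prop :=
  ∀ F ∈ Δ, ∀ G ⊆ F, G ∈ Δ

/-- The barycentric subdivision of `Δ`: vertices are the nonempty faces of `Δ` (their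
barycenters), faces are chains of such faces. -/
def Sd {V : Type*} (Δ : Set (Finset V)) : Set (Finset (Finset V)) :=
  {C | (∀ F ∈ C, F ∈ Δ ∧ F.Nonempty) ∧ ∀ F ∈ C, ∀ G ∈ C, F ⊆ G ∨ G ⊆ F}

/-- The full subcomplex `Sd(Δ - Σ)` of `Sd(Δ)` on the vertices that are not barycenters
of faces of `Σ`. -/
def SdMinus {V : Type*} (Δ S : Set (Finset V)) : Set (Finset (Finset V)) :=
  {C | C ∈ Sd Δ ∧ ∀ F ∈ C, F ∉ S}

/-- The geometric realization of a simplicial complex on a vertex type `V`. -/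
def realize {V : Type*} (Δ : Set (Finset V)) : Set (V → ℝ) :=
  {p | (∀ v, 0 ≤ p v) ∧ ∃ F ∈ Δ, (∀ v, p v ≠ 0 → v ∈ F) ∧ ∑ v ∈ F, p v = 1}

/-- A homotopy equivalence of pairs `(X, A) ≃ (Y, B)`: maps of pairs in both directions
whose composites are homotopic to the identities through maps of pairs. -/
def IsPairHomotopyEquiv {X Y : Type*} [TopologicalSpace X] [TopologicalSpace Y]
    (A : Set X) (B : Set Y) : Prop :=
  ∃ (f : C(X, Y)) (g : C(Y, X)), Set.MapsTo f A B ∧ Set.MapsTo g B A ∧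
    Nonempty (ContinuousMap.HomotopyWith (g.comp f) (ContinuousMap.id X)
      (fun h => Set.MapsTo h A A)) ∧
    Nonempty (ContinuousMap.HomotopyWith (f.comp g) (ContinuousMap.id Y)
      (fun h => Set.MapsTo h B B))

/-!
A point `x` of the standard simplex has canonical coordinates in the barycentric subdivision:
by the layer-cake formula, `x = ∑_F w_F 𝟙_F` where `w_F` is the length of the set of levels
`a ≥ 0` with `{u | a < x u} = F`, that is, `x = ∑_F |F| w_F b_F` with `b_F` the barycenter of `F`.
The faces with `w_F ≠ 0` are superlevel sets, hence form a chain, whose top is the support of `x`.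
Discarding the coordinates on faces of `Σ` and renormalising gives `|Δ| - |Σ| → |Sd(Δ - Σ)|`,
well defined because the support of `x` is not in `Σ`; the linear map `p ↦ ∑_F p_F b_F` goes
back. A chain-supported `p` is recovered from its image by peeling off the top face, so one
composite is the identity; the other preserves the support of `x`, so the straight-line homotopy
to the identity stays inside every `|K|` that contains `x`.
-/

open Finset Function Set MeasureTheory

lemma nonempty_homotopyWith_id_of_lineMap_mem {E : Type*} [AddCommGroup E] [Module ℝ E]
    [TopologicalSpace E] [IsTopologicalAddGroup E] [ContinuousSMul ℝ E] {X A : Set E}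
    (φ : C(X, X))
    (hX : ∀ (x : X) (t : unitInterval), AffineMap.lineMap (φ x : E) x (t : ℝ) ∈ X)
    (hA : ∀ (x : X) (t : unitInterval), (x : E) ∈ A →
      AffineMap.lineMap (φ x : E) x (t : ℝ) ∈ A) :
    Nonempty (φ.HomotopyWith (ContinuousMap.id X)
      fun h => MapsTo h {x | ↑x ∈ A} {x | ↑x ∈ A}) :=
  ⟨{ toFun := fun p => ⟨AffineMap.lineMap (φ p.2 : E) p.2 (p.1 : ℝ), hX p.2 p.1⟩
     continuous_toFun := by
       simp only [AffineMap.lineMap_apply_module]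
       fun_prop
     map_zero_left := fun x => Subtype.ext (by simp)
     map_one_left := fun x => Subtype.ext (by simp)
     prop' := fun t x hx => hA x t hx }⟩

namespace BarycentricSubdivision

section Support

variable {α : Type*} [Fintype α]

noncomputable def supportFinset (p : α → ℝ) : Finset α := {a | p a ≠ 0}

@[simp]
lemma mem_supportFinset {p : α → ℝ} {a : α} : a ∈ supportFinset p ↔ p a ≠ 0 := by
  simp [supportFinset]

lemma supportFinset_update_zero [DecidableEq α] (p : α → ℝ) (a : α) :
    supportFinset (update p a 0) = (supportFinset p).erase a := by
  ext b
  rcases eq_or_ne b a with rfl | h <;> simp [*]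

end Support

variable {V : Type*}

structure IsChainWeight (p : Finset V → ℝ) : Prop where
  nonneg : 0 ≤ p
  nonempty : ∀ F, p F ≠ 0 → F.Nonempty
  isChain : IsChain (· ⊆ ·) (support p)

lemma IsChainWeight.of_support_subset {p q : Finset V → ℝ} (hp : IsChainWeight p) (hq : 0 ≤ q)
    (h : support q ⊆ support p) : IsChainWeight q :=
  ⟨hq, fun F hF => hp.nonempty F (h hF), hp.isChain.mono h⟩

lemma IsChainWeight.update_zero [DecidableEq V] {p : Finset V → ℝ} (hp : IsChainWeight p)
    (M : Finset V) : IsChainWeight (update p M 0) := by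
  refine hp.of_support_subset (fun F => ?_) fun F hF => ?_
  · rcases eq_or_ne F M with rfl | h
    · simp
    · simpa [h] using hp.nonneg F
  · rcases eq_or_ne F M with rfl | h
    · simp at hF
    · simpa [h] using hF

lemma IsChainWeight.exists_top [Finite V] {p : Finset V → ℝ} (hp : IsChainWeight p)
    (h : p ≠ 0) : ∃ M, p M ≠ 0 ∧ ∀ F, p F ≠ 0 → F ⊆ M := by
  obtain ⟨M, hM, hmax⟩ := (toFinite (support p)).exists_maximal (support_nonempty_iff.2 h)
  exact ⟨M, hM, fun F hF => (hp.isChain.total hF hM).elim id fun hMF => hmax hF hMF⟩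

lemma isComplex_sdMinus (Δ S : Set (Finset V)) : IsComplex (SdMinus Δ S) :=
  fun _ ⟨⟨hfaces, hchain⟩, hS⟩ _ hsub =>
    ⟨⟨fun F hF => hfaces F (hsub hF), fun F hF G hG => hchain F (hsub hF) G (hsub hG)⟩,
      fun F hF => hS F (hsub hF)⟩

noncomputable def barycenter [DecidableEq V] (F : Finset V) : V → ℝ :=
  fun v => if v ∈ F then (#F : ℝ)⁻¹ else 0

lemma barycenter_nonneg [DecidableEq V] (F : Finset V) : 0 ≤ barycenter F := fun v => by
  unfold barycenter
  split_ifs <;> positivity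

lemma continuous_fold_max (s : Finset V) : Continuous fun x : V → ℝ => s.fold max 0 x := by
  induction s using Finset.cons_induction with
  | empty => exact continuous_const
  | cons a s ha ih =>
    simp only [fold_cons ha]
    exact (continuous_apply a).max ih

variable [Fintype V]

lemma mem_realize_of_supportFinset_mem {Δ : Set (Finset V)} {p : V → ℝ}
    (hp : p ∈ stdSimplex ℝ V) (h : supportFinset p ∈ Δ) : p ∈ realize Δ :=
  ⟨hp.1, _, h, fun _ hv => mem_supportFinset.2 hv,
    (sum_subset (subset_univ _) fun v _ hv => by simpa using hv).trans hp.2⟩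

lemma mem_realize_iff {Δ : Set (Finset V)} (hΔ : IsComplex Δ) {p : V → ℝ} :
    p ∈ realize Δ ↔ p ∈ stdSimplex ℝ V ∧ supportFinset p ∈ Δ := by
  refine ⟨?_, fun h => mem_realize_of_supportFinset_mem h.1 h.2⟩
  rintro ⟨h0, F, hF, hsupp, hsum⟩
  refine ⟨⟨h0, ?_⟩, hΔ F hF _ fun v hv => hsupp v (mem_supportFinset.1 hv)⟩
  rwa [← sum_subset (subset_univ F) fun v _ hv => by_contra fun h => hv (hsupp v h)]

lemma mem_realize_iff_of_supportFinset_eq {Δ : Set (Finset V)} (hΔ : IsComplex Δ)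
    {p q : V → ℝ} (hp : p ∈ stdSimplex ℝ V) (hq : q ∈ stdSimplex ℝ V)
    (h : supportFinset p = supportFinset q) :
    p ∈ realize Δ ↔ q ∈ realize Δ := by
  simp [mem_realize_iff hΔ, hp, hq, h]

lemma mem_realize_diff_iff {Δ S : Set (Finset V)} (hΔ : IsComplex Δ) (hS : IsComplex S)
    {x : V → ℝ} : x ∈ realize Δ \ realize S ↔
      x ∈ stdSimplex ℝ V ∧ supportFinset x ∈ Δ ∧ supportFinset x ∉ S := by
  simp only [mem_sdiff, mem_realize_iff hΔ, mem_realize_iff hS]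
  tauto

lemma supportFinset_lineMap {x y : V → ℝ} (hx : 0 ≤ x) (hy : 0 ≤ y)
    (h : supportFinset y = supportFinset x) {t : ℝ} (ht : t ∈ Set.Icc 0 1) :
    supportFinset (AffineMap.lineMap y x t) = supportFinset x := by
  ext v
  have hv : y v = 0 ↔ x v = 0 := by simpa using (Finset.ext_iff.1 h v).not
  simp only [mem_supportFinset, AffineMap.lineMap_apply_module, Pi.add_apply, Pi.smul_apply,
    smul_eq_mul]
  by_cases hxv : x v = 0
  · simp [hxv, hv.2 hxv]
  refine iff_of_true (ne_of_gt ?_) hxv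
  have hyv : 0 < y v := (hy v).lt_of_ne' (mt hv.1 hxv)
  rcases ht.1.eq_or_lt with rfl | htpos
  · simpa using hyv
  nlinarith [mul_pos htpos ((hx v).lt_of_ne' hxv), mul_nonneg (sub_nonneg.2 ht.2) hyv.le]

lemma supportFinset_nonempty {p : V → ℝ} (hp : p ∈ stdSimplex ℝ V) :
    (supportFinset p).Nonempty := by
  by_contra h
  have : ∑ v, p v = 0 :=
    sum_eq_zero fun v _ => by_contra fun hv => h ⟨v, mem_supportFinset.2 hv⟩
  linarith [hp.2]

lemma mem_realize_sdMinus_iff {Δ S : Set (Finset V)} {p : Finset V → ℝ} :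
    p ∈ realize (SdMinus Δ S) ↔
      p ∈ stdSimplex ℝ (Finset V) ∧ IsChainWeight p ∧ ∀ F, p F ≠ 0 → F ∈ Δ ∧ F ∉ S := by
  rw [mem_realize_iff (isComplex_sdMinus Δ S)]
  simp only [SdMinus, Sd, mem_ofPred_eq, mem_supportFinset]
  constructor
  · rintro ⟨hp, ⟨hfaces, hchain⟩, hS⟩
    exact ⟨hp, ⟨hp.1, fun F hF => (hfaces F hF).2, fun F hF G hG _ => hchain F hF G hG⟩,
      fun F hF => ⟨(hfaces F hF).1, hS F hF⟩⟩
  · rintro ⟨hp, hc, hfaces⟩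
    refine ⟨hp, ⟨fun F hF => ⟨(hfaces F hF).1, hc.nonempty F hF⟩, fun F hF G hG => ?_⟩,
      fun F hF => (hfaces F hF).2⟩
    rcases eq_or_ne F G with rfl | hFG
    · exact Or.inl subset_rfl
    · exact hc.isChain hF hG hFG

variable [DecidableEq V]

lemma sum_barycenter {F : Finset V} (hF : F.Nonempty) : ∑ v, barycenter F v = 1 := by
  simp [barycenter, hF.card_pos.ne']

noncomputable def ofSdCoords : (Finset V → ℝ) →ₗ[ℝ] V → ℝ :=
  Fintype.linearCombination ℝ barycenter

lemma ofSdCoords_apply (p : Finset V → ℝ) (v : V) :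
    ofSdCoords p v = ∑ F, p F * barycenter F v := by
  simp [ofSdCoords, Fintype.linearCombination_apply]

lemma ofSdCoords_nonneg {p : Finset V → ℝ} (hp : 0 ≤ p) : 0 ≤ ofSdCoords p := fun v => by
  rw [ofSdCoords_apply]
  exact sum_nonneg fun F _ => mul_nonneg (hp F) (barycenter_nonneg F v)

lemma ofSdCoords_pos {p : Finset V → ℝ} (hp : 0 ≤ p) {M : Finset V} (hM : p M ≠ 0) {v : V}
    (hv : v ∈ M) : 0 < ofSdCoords p v := by
  rw [ofSdCoords_apply]
  refine lt_of_lt_of_le ?_ (single_le_sum (fun F _ => mul_nonneg (hp F) (barycenter_nonneg F v))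
    (mem_univ M))
  have : 0 < (#M : ℝ) := by exact_mod_cast card_pos.2 ⟨v, hv⟩
  simp only [barycenter, if_pos hv]
  exact mul_pos ((hp M).lt_of_ne' hM) (inv_pos.2 this)

lemma ofSdCoords_eq_zero {p : Finset V → ℝ} {M : Finset V} (htop : ∀ F, p F ≠ 0 → F ⊆ M)
    {v : V} (hv : v ∉ M) : ofSdCoords p v = 0 := by
  rw [ofSdCoords_apply]
  refine sum_eq_zero fun F _ => ?_
  by_cases hF : p F = 0
  · rw [hF, zero_mul]
  · have hvF : v ∉ F := fun h => hv (htop F hF h)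
    simp [barycenter, hvF]

lemma sum_ofSdCoords {p : Finset V → ℝ} (hp : ∀ F, p F ≠ 0 → F.Nonempty) :
    ∑ v, ofSdCoords p v = ∑ F, p F := by
  simp_rw [ofSdCoords_apply]
  rw [sum_comm]
  refine sum_congr rfl fun F _ => ?_
  by_cases hF : p F = 0
  · simp [hF]
  · rw [← mul_sum, sum_barycenter (hp F hF), mul_one]

lemma supportFinset_ofSdCoords {p : Finset V → ℝ} (hp : 0 ≤ p) {M : Finset V} (hM : p M ≠ 0)
    (htop : ∀ F, p F ≠ 0 → F ⊆ M) : supportFinset (ofSdCoords p) = M := by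
  ext v
  rw [mem_supportFinset]
  exact ⟨fun h => by_contra fun hv => h (ofSdCoords_eq_zero htop hv),
    fun hv => (ofSdCoords_pos hp hM hv).ne'⟩

lemma ofSdCoords_eq_update_add (p : Finset V → ℝ) (M : Finset V) :
    ofSdCoords p = ofSdCoords (update p M 0) + p M • barycenter M := by
  have hsplit : p = update p M 0 + Pi.single M (p M) := by
    ext F
    rcases eq_or_ne F M with rfl | h <;> simp [*]
  conv_lhs => rw [hsplit]
  rw [map_add, ofSdCoords, Fintype.linearCombination_apply_single]

lemma IsChainWeight.ofSdCoords_eq_zero_iff {p : Finset V → ℝ} (hp : IsChainWeight p) :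
    ofSdCoords p = 0 ↔ p = 0 := by
  refine ⟨fun h => by_contra fun hp0 => ?_, fun h => by rw [h, map_zero]⟩
  obtain ⟨M, hM, -⟩ := hp.exists_top hp0
  obtain ⟨v, hv⟩ := hp.nonempty M hM
  simpa [h] using ofSdCoords_pos hp.nonneg hM hv

lemma IsChainWeight.isLeast_ofSdCoords_top {p : Finset V → ℝ} (hp : IsChainWeight p)
    {M : Finset V} (hM : p M ≠ 0) (htop : ∀ F, p F ≠ 0 → F ⊆ M) :
    IsLeast (ofSdCoords p '' M) (p M / #M) := by
  let p' := update p M 0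
  have hp' : IsChainWeight p' := hp.update_zero M
  have hval : ∀ v ∈ M, ofSdCoords p v = ofSdCoords p' v + p M / #M := fun v hv => by
    rw [ofSdCoords_eq_update_add p M]
    simp [p', barycenter, hv, div_eq_mul_inv]
  obtain ⟨v, hvM, hv0⟩ : ∃ v ∈ M, ofSdCoords p' v = 0 := by
    by_cases h0 : p' = 0
    · obtain ⟨v, hv⟩ := hp.nonempty M hM
      exact ⟨v, hv, by simp [h0]⟩
    obtain ⟨G, hG, hGtop⟩ := hp'.exists_top h0
    have hGM : G ≠ M := by rintro rfl; simp [p'] at hG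
    have hGM' : G ⊂ M := Finset.ssubset_iff_subset_ne.2
      ⟨htop G (by simpa [p', hGM] using hG), hGM⟩
    obtain ⟨v, hvM, hvG⟩ := Finset.exists_of_ssubset hGM'
    exact ⟨v, hvM, ofSdCoords_eq_zero hGtop hvG⟩
  refine ⟨⟨v, hvM, by rw [hval v hvM, hv0, zero_add]⟩, ?_⟩
  rintro _ ⟨u, hu, rfl⟩
  have hu0 : 0 ≤ ofSdCoords p' u := ofSdCoords_nonneg hp'.nonneg u
  rw [hval u hu]
  linarith

theorem IsChainWeight.eq_of_ofSdCoords_eq {p q : Finset V → ℝ} (hp : IsChainWeight p)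
    (hq : IsChainWeight q) (h : ofSdCoords p = ofSdCoords q) : p = q := by
  by_cases hp0 : p = 0
  · rw [hp0, map_zero, eq_comm, hq.ofSdCoords_eq_zero_iff] at h
    rw [hp0, h]
  have hq0 : q ≠ 0 := by
    rintro rfl
    rw [map_zero, hp.ofSdCoords_eq_zero_iff] at h
    exact hp0 h
  obtain ⟨M, hM, htop⟩ := hp.exists_top hp0
  obtain ⟨N, hN, htopN⟩ := hq.exists_top hq0
  obtain rfl : M = N := by
    rw [← supportFinset_ofSdCoords hp.nonneg hM htop, h,
      supportFinset_ofSdCoords hq.nonneg hN htopN]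
  have hcoef : p M = q M := by
    have hc : (#M : ℝ) ≠ 0 := by exact_mod_cast (hp.nonempty M hM).card_pos.ne'
    have := (hp.isLeast_ofSdCoords_top hM htop).unique (h ▸ hq.isLeast_ofSdCoords_top hN htopN)
    rwa [div_left_inj' hc] at this
  have hrest : update p M 0 = update q M 0 := by
    refine (hp.update_zero M).eq_of_ofSdCoords_eq (hq.update_zero M) ?_
    have := (ofSdCoords_eq_update_add p M).symm.trans (h.trans (ofSdCoords_eq_update_add q M))
    rw [hcoef] at this
    exact add_right_cancel this
  calc p = update (update p M 0) M (p M) := by simp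
    _ = q := by rw [hrest, hcoef]; simp
termination_by #(supportFinset p)
decreasing_by
  rw [supportFinset_update_zero]
  exact card_erase_lt_of_mem (mem_supportFinset.2 hM)

noncomputable def levelWidth (x : V → ℝ) (F : Finset V) : ℝ :=
  if h : F.Nonempty then max 0 (F.inf' h x - Fᶜ.fold max 0 x) else 0

lemma levelWidth_nonneg (x : V → ℝ) (F : Finset V) : 0 ≤ levelWidth x F := by
  unfold levelWidth
  split_ifs
  exacts [le_max_left _ _, le_rfl]

lemma setOf_superlevel_eq_Ico (x : V → ℝ) {F : Finset V} (hF : F.Nonempty) :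
    {a : ℝ | 0 ≤ a ∧ ({u | a < x u} : Finset V) = F} =
      Set.Ico (Fᶜ.fold max 0 x) (F.inf' hF x) := by
  ext a
  simp only [mem_ofPred_eq, Set.mem_Ico, fold_max_le, lt_inf'_iff, Finset.mem_compl,
    Finset.ext_iff, Finset.mem_filter, Finset.mem_univ, true_and]
  constructor
  · rintro ⟨ha, hF⟩
    exact ⟨⟨ha, fun u hu => not_lt.1 fun h => hu ((hF u).1 h)⟩, fun u hu => (hF u).2 hu⟩
  · rintro ⟨⟨ha, hout⟩, hin⟩
    exact ⟨ha, fun u => ⟨fun h => by_contra fun hu => not_lt.2 (hout u hu) h, hin u⟩⟩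

lemma levelWidth_eq_volume (x : V → ℝ) {F : Finset V} (hF : F.Nonempty) :
    levelWidth x F = (volume {a : ℝ | 0 ≤ a ∧ ({u | a < x u} : Finset V) = F}).toReal := by
  rw [setOf_superlevel_eq_Ico x hF, Real.volume_Ico, ENNReal.toReal_ofReal', levelWidth,
    dif_pos hF, max_comm]

lemma sum_levelWidth_filter_mem (x : V → ℝ) {v : V} (hv : 0 ≤ x v) :
    ∑ F with v ∈ F, levelWidth x F = x v := by
  let fiber (F : Finset V) : Set ℝ := {a | 0 ≤ a ∧ ({u | a < x u} : Finset V) = F}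
  have hfiber {F} (hF : F ∈ ({F | v ∈ F} : Finset (Finset V))) :
      fiber F = Set.Ico (Fᶜ.fold max 0 x) (F.inf' ⟨v, (mem_filter.1 hF).2⟩ x) :=
    setOf_superlevel_eq_Ico x _
  have hunion : ⋃ F ∈ ({F | v ∈ F} : Finset (Finset V)), fiber F = Set.Ico 0 (x v) := by
    ext a
    simp [fiber, and_comm]
  have hdisj : Set.PairwiseDisjoint ↑({F | v ∈ F} : Finset (Finset V)) fiber :=
    fun F _ G _ hne => Set.disjoint_left.2 fun a ha hb => hne (ha.2.symm.trans hb.2)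
  calc ∑ F with v ∈ F, levelWidth x F = ∑ F with v ∈ F, (volume (fiber F)).toReal :=
        sum_congr rfl fun F hF => levelWidth_eq_volume x ⟨v, (mem_filter.1 hF).2⟩
    _ = (∑ F with v ∈ F, volume (fiber F)).toReal :=
        (ENNReal.toReal_sum fun F hF => by simp [hfiber hF]).symm
    _ = x v := by
        rw [← measure_biUnion_finset hdisj fun F hF => hfiber hF ▸ measurableSet_Ico, hunion,
          Real.volume_Ico, sub_zero, ENNReal.toReal_ofReal hv]

lemma exists_superlevel_eq_of_levelWidth_ne_zero {x : V → ℝ} {F : Finset V}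
    (h : levelWidth x F ≠ 0) : F.Nonempty ∧ ∃ a, 0 ≤ a ∧ ({u | a < x u} : Finset V) = F := by
  have hF : F.Nonempty := by_contra fun hF => h (dif_neg hF)
  rw [levelWidth_eq_volume x hF, ENNReal.toReal_ne_zero] at h
  exact ⟨hF, nonempty_of_measure_ne_zero h.1⟩

lemma continuous_levelWidth (F : Finset V) : Continuous fun x : V → ℝ => levelWidth x F := by
  unfold levelWidth
  split_ifs with hF
  · exact continuous_const.max
      ((Continuous.finset_inf'_apply hF fun u _ => continuous_apply u).sub (continuous_fold_max _))
  · exact continuous_const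

noncomputable def sdCoords (x : V → ℝ) (F : Finset V) : ℝ := #F * levelWidth x F

lemma isChainWeight_sdCoords (x : V → ℝ) : IsChainWeight (sdCoords x) := by
  have hlw {F} (hF : sdCoords x F ≠ 0) := exists_superlevel_eq_of_levelWidth_ne_zero
    (right_ne_zero_of_mul hF)
  refine ⟨fun F => mul_nonneg (Nat.cast_nonneg _) (levelWidth_nonneg x F),
    fun F hF => (hlw hF).1, fun F hF G hG _ => ?_⟩
  obtain ⟨-, a, -, rfl⟩ := hlw hF
  obtain ⟨-, b, -, rfl⟩ := hlw hG
  rcases le_total a b with hab | hab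
  · exact Or.inr (monotone_filter_right _ fun _ _ hu => hab.trans_lt hu)
  · exact Or.inl (monotone_filter_right _ fun _ _ hu => hab.trans_lt hu)

lemma subset_supportFinset_of_sdCoords_ne_zero {x : V → ℝ} {F : Finset V}
    (hF : sdCoords x F ≠ 0) : F ⊆ supportFinset x := by
  obtain ⟨-, a, ha, rfl⟩ := exists_superlevel_eq_of_levelWidth_ne_zero (right_ne_zero_of_mul hF)
  intro u hu
  rw [Finset.mem_filter] at hu
  exact mem_supportFinset.2 (by linarith [hu.2])

lemma sdCoords_supportFinset_pos {x : V → ℝ} (hx : 0 ≤ x) (hne : (supportFinset x).Nonempty) :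
    0 < sdCoords x (supportFinset x) := by
  have hout : (supportFinset x)ᶜ.fold max 0 x ≤ 0 :=
    (fold_max_le _).2 ⟨le_rfl, fun u hu => by simp_all⟩
  have hin : 0 < (supportFinset x).inf' hne x :=
    (lt_inf'_iff _).2 fun u hu => (hx u).lt_of_ne' (mem_supportFinset.1 hu)
  refine mul_pos (by exact_mod_cast hne.card_pos) ?_
  rw [levelWidth, dif_pos hne]
  exact lt_max_of_lt_right (by linarith)

lemma ofSdCoords_sdCoords {x : V → ℝ} (hx : 0 ≤ x) : ofSdCoords (sdCoords x) = x := by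
  ext v
  have hterm (F : Finset V) :
      sdCoords x F * barycenter F v = if v ∈ F then levelWidth x F else 0 := by
    by_cases hv : v ∈ F
    · have hF : (#F : ℝ) ≠ 0 := by exact_mod_cast (card_pos.2 ⟨v, hv⟩).ne'
      simp [sdCoords, barycenter, hv]
      field_simp
    · simp [barycenter, hv]
  simp_rw [ofSdCoords_apply, hterm, ← sum_filter]
  exact sum_levelWidth_filter_mem x (hx v)

noncomputable def sdMinusCoords (S : Set (Finset V)) (x : V → ℝ) : Finset V → ℝ :=
  (∑ F, Sᶜ.indicator (sdCoords x) F)⁻¹ • Sᶜ.indicator (sdCoords x)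

lemma sum_indicator_sdCoords_pos {S : Set (Finset V)} {x : V → ℝ} (hx : x ∈ stdSimplex ℝ V)
    (hxS : supportFinset x ∉ S) : 0 < ∑ F, Sᶜ.indicator (sdCoords x) F := by
  refine sum_pos'
    (fun F _ => indicator_nonneg (fun F _ => (isChainWeight_sdCoords x).nonneg F) F)
    ⟨supportFinset x, mem_univ _, ?_⟩
  rw [indicator_of_mem hxS]
  exact sdCoords_supportFinset_pos hx.1 (supportFinset_nonempty hx)

lemma sdMinusCoords_ne_zero_iff {S : Set (Finset V)} {x : V → ℝ} (hx : x ∈ stdSimplex ℝ V)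
    (hxS : supportFinset x ∉ S) {F : Finset V} :
    sdMinusCoords S x F ≠ 0 ↔ F ∉ S ∧ sdCoords x F ≠ 0 := by
  have := (sum_indicator_sdCoords_pos hx hxS).ne'
  by_cases hF : F ∈ S <;> simp [sdMinusCoords, hF, this]

lemma sdMinusCoords_mem_stdSimplex {S : Set (Finset V)} {x : V → ℝ} (hx : x ∈ stdSimplex ℝ V)
    (hxS : supportFinset x ∉ S) : sdMinusCoords S x ∈ stdSimplex ℝ (Finset V) := by
  have hpos := sum_indicator_sdCoords_pos hx hxS
  refine ⟨fun F => smul_nonneg (inv_nonneg.2 hpos.le)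
    (indicator_nonneg (fun F _ => (isChainWeight_sdCoords x).nonneg F) F), ?_⟩
  simp only [sdMinusCoords, Pi.smul_apply, smul_eq_mul, ← mul_sum]
  exact inv_mul_cancel₀ hpos.ne'

lemma isChainWeight_sdMinusCoords {S : Set (Finset V)} {x : V → ℝ} (hx : x ∈ stdSimplex ℝ V)
    (hxS : supportFinset x ∉ S) : IsChainWeight (sdMinusCoords S x) :=
  (isChainWeight_sdCoords x).of_support_subset (sdMinusCoords_mem_stdSimplex hx hxS).1
    fun _ hF => ((sdMinusCoords_ne_zero_iff hx hxS).1 hF).2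

lemma supportFinset_ofSdCoords_sdMinusCoords {S : Set (Finset V)} {x : V → ℝ}
    (hx : x ∈ stdSimplex ℝ V) (hxS : supportFinset x ∉ S) :
    supportFinset (ofSdCoords (sdMinusCoords S x)) = supportFinset x :=
  supportFinset_ofSdCoords (sdMinusCoords_mem_stdSimplex hx hxS).1
    ((sdMinusCoords_ne_zero_iff hx hxS).2
      ⟨hxS, (sdCoords_supportFinset_pos hx.1 (supportFinset_nonempty hx)).ne'⟩)
    fun _ hF =>
      subset_supportFinset_of_sdCoords_ne_zero ((sdMinusCoords_ne_zero_iff hx hxS).1 hF).2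

lemma mapsTo_sdMinusCoords {Δ S : Set (Finset V)} (hΔ : IsComplex Δ) (hS : IsComplex S) :
    MapsTo (sdMinusCoords S) (realize Δ \ realize S) (realize (SdMinus Δ S)) := fun x hx => by
  obtain ⟨hx, hxΔ, hxS⟩ := (mem_realize_diff_iff hΔ hS).1 hx
  refine mem_realize_sdMinus_iff.2 ⟨sdMinusCoords_mem_stdSimplex hx hxS,
    isChainWeight_sdMinusCoords hx hxS, fun F hF => ?_⟩
  obtain ⟨hFS, hF⟩ := (sdMinusCoords_ne_zero_iff hx hxS).1 hF
  exact ⟨hΔ _ hxΔ F (subset_supportFinset_of_sdCoords_ne_zero hF), hFS⟩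

lemma continuousOn_sdMinusCoords (S : Set (Finset V)) :
    ContinuousOn (sdMinusCoords S) {x | ∑ F, Sᶜ.indicator (sdCoords x) F ≠ 0} := by
  have hcont : Continuous fun x : V → ℝ => Sᶜ.indicator (sdCoords x) := by
    refine continuous_pi fun F => ?_
    by_cases hF : F ∈ S
    · simpa [hF] using continuous_const
    · simp only [indicator_of_mem (mem_compl hF), sdCoords]
      exact continuous_const.mul (continuous_levelWidth F)
  exact ((continuous_finsetSum _ fun F _ => (continuous_apply F).comp hcont).continuousOn.inv₀
    fun _ hx => hx).smul hcont.continuousOn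

lemma ofSdCoords_mem_stdSimplex {p : Finset V → ℝ} (hp : p ∈ stdSimplex ℝ (Finset V))
    (hne : ∀ F, p F ≠ 0 → F.Nonempty) : ofSdCoords p ∈ stdSimplex ℝ V :=
  ⟨ofSdCoords_nonneg hp.1, (sum_ofSdCoords hne).trans hp.2⟩

lemma supportFinset_ofSdCoords_mem {Δ S : Set (Finset V)} {p : Finset V → ℝ}
    (hp : p ∈ realize (SdMinus Δ S)) :
    supportFinset (ofSdCoords p) ∈ Δ ∧ supportFinset (ofSdCoords p) ∉ S := by
  obtain ⟨hp, hc, hfaces⟩ := mem_realize_sdMinus_iff.1 hp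
  obtain ⟨M, hM, htop⟩ := hc.exists_top fun h => by simpa [h] using hp.2
  rw [supportFinset_ofSdCoords hc.nonneg hM htop]
  exact hfaces M hM

lemma mapsTo_ofSdCoords_realize {Δ S : Set (Finset V)} :
    MapsTo ofSdCoords (realize (SdMinus Δ S)) (realize Δ) := fun p hp => by
  obtain ⟨hp', hc, -⟩ := mem_realize_sdMinus_iff.1 hp
  exact mem_realize_of_supportFinset_mem (ofSdCoords_mem_stdSimplex hp' hc.nonempty)
    (supportFinset_ofSdCoords_mem hp).1

lemma mapsTo_ofSdCoords {Δ S : Set (Finset V)} (hS : IsComplex S) :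
    MapsTo ofSdCoords (realize (SdMinus Δ S)) (realize Δ \ realize S) := fun _ hp =>
  ⟨mapsTo_ofSdCoords_realize hp,
    fun h => (supportFinset_ofSdCoords_mem hp).2 ((mem_realize_iff hS).1 h).2⟩

lemma sdMinusCoords_ofSdCoords {Δ S : Set (Finset V)} {p : Finset V → ℝ}
    (hp : p ∈ realize (SdMinus Δ S)) : sdMinusCoords S (ofSdCoords p) = p := by
  obtain ⟨hp, hc, hfaces⟩ := mem_realize_sdMinus_iff.1 hp
  have hsd : sdCoords (ofSdCoords p) = p := (isChainWeight_sdCoords _).eq_of_ofSdCoords_eq hc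
    (ofSdCoords_sdCoords (ofSdCoords_nonneg hc.nonneg))
  have hind : Sᶜ.indicator p = p := indicator_eq_self.2 fun F hF => (hfaces F hF).2
  rw [sdMinusCoords, hsd, hind, hp.2, inv_one, one_smul]

lemma lineMap_mem_realize_iff {Δ S K : Set (Finset V)} (hΔ : IsComplex Δ) (hS : IsComplex S)
    (hK : IsComplex K) {x : V → ℝ} (hx : x ∈ realize Δ \ realize S) {t : ℝ}
    (ht : t ∈ Set.Icc 0 1) :
    AffineMap.lineMap (ofSdCoords (sdMinusCoords S x)) x t ∈ realize K ↔ x ∈ realize K := by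
  obtain ⟨hx, -, hxS⟩ := (mem_realize_diff_iff hΔ hS).1 hx
  have hy := ofSdCoords_mem_stdSimplex (sdMinusCoords_mem_stdSimplex hx hxS)
    (isChainWeight_sdMinusCoords hx hxS).nonempty
  exact mem_realize_iff_of_supportFinset_eq hK ((convex_stdSimplex ℝ V).lineMap_mem hy hx ht) hx
    (supportFinset_lineMap hx.1 hy.1 (supportFinset_ofSdCoords_sdMinusCoords hx hxS) ht)

noncomputable def toSdMinus {Δ S : Set (Finset V)} (hΔ : IsComplex Δ) (hS : IsComplex S) :
    C((realize Δ \ realize S : Set (V → ℝ)), realize (SdMinus Δ S)) where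
  toFun := (mapsTo_sdMinusCoords hΔ hS).restrict
  continuous_toFun := by
    refine ((continuousOn_sdMinusCoords S).mono fun x hx => ?_).mapsToRestrict _
    obtain ⟨hx, -, hxS⟩ := (mem_realize_diff_iff hΔ hS).1 hx
    exact (sum_indicator_sdCoords_pos hx hxS).ne'

noncomputable def ofSdMinus {Δ S : Set (Finset V)} (hS : IsComplex S) :
    C(realize (SdMinus Δ S), (realize Δ \ realize S : Set (V → ℝ))) where
  toFun := (mapsTo_ofSdCoords hS).restrict
  continuous_toFun := (LinearMap.continuous_of_finiteDimensional _).continuousOn.mapsToRestrict _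

lemma toSdMinus_comp_ofSdMinus {Δ S : Set (Finset V)} (hΔ : IsComplex Δ) (hS : IsComplex S) :
    (toSdMinus hΔ hS).comp (ofSdMinus hS) = ContinuousMap.id _ :=
  ContinuousMap.ext fun p => Subtype.ext (sdMinusCoords_ofSdCoords p.2)

end BarycentricSubdivision

open BarycentricSubdivision

theorem pair_homotopyEquiv_sdMinus_general {n : ℕ} (Δ Δ' S : Set (Finset (Fin n)))
    (hΔ : IsComplex Δ) (hΔ' : IsComplex Δ') (hS : IsComplex S) :
    IsPairHomotopyEquiv
      (X := (realize Δ \ realize S : Set (Fin n → ℝ)))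
      (Y := (realize (SdMinus Δ S) : Set (Finset (Fin n) → ℝ)))
      {x | x.val ∈ realize Δ'} {y | y.val ∈ realize (SdMinus Δ' S)} := by
  refine ⟨toSdMinus hΔ hS, ofSdMinus hS, fun x hx => mapsTo_sdMinusCoords hΔ' hS ⟨hx, x.2.2⟩,
    fun p hp => mapsTo_ofSdCoords_realize hp, ?_, ?_⟩
  · refine nonempty_homotopyWith_id_of_lineMap_mem _ (fun x t => ⟨?_, fun h => ?_⟩)
      fun x t hx => ?_
    · exact (lineMap_mem_realize_iff hΔ hS hΔ x.2 t.2).2 x.2.1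
    · exact x.2.2 ((lineMap_mem_realize_iff hΔ hS hS x.2 t.2).1 h)
    · exact (lineMap_mem_realize_iff hΔ hS hΔ' x.2 t.2).2 hx
  · rw [toSdMinus_comp_ofSdMinus]
    exact ⟨.refl _ (mapsTo_id _)⟩

/-- Let `Δ` be a simplicial complex with subcomplexes `Δ'` and `Σ`. Then the pair
`(|Δ| - |Σ|, |Δ'| - |Σ|)` is homotopy equivalent as a pair to
`(|Sd(Δ - Σ)|, |Sd(Δ' - Σ)|)`. -/
theorem pair_homotopyEquiv_sdMinus {n : ℕ} (Δ Δ' S : Set (Finset (Fin n)))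
    (hΔ : IsComplex Δ) (hΔ' : IsComplex Δ') (hS : IsComplex S)
    (hle' : Δ' ⊆ Δ) (hleS : S ⊆ Δ) :
    IsPairHomotopyEquiv
      (X := (realize Δ \ realize S : Set (Fin n → ℝ)))
      (Y := (realize (SdMinus Δ S) : Set (Finset (Fin n) → ℝ)))
      {x | x.val ∈ realize Δ'} {y | y.val ∈ realize (SdMinus Δ' S)} :=
  pair_homotopyEquiv_sdMinus_general Δ Δ' S hΔ hΔ' hS
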